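/- arXiv:1709.06120 — 3 statements merged into one kernel-verified Lean document; each statement's English description precedes it below -/
import Mathlib

section
/- Let n ≥ 2, p > 1, r > 1, and real numbers α, β, γ satisfy 1/r − γ/n > 0, 1/p − α/n > 0, 1 − β/n > 0, and γ = (1+α)/r + ((p−1)/(pr))β. Then for every smooth compactly supported function f : ℝ^n → ℝ, ∫_{ℝ^n} |f(x)|^r |x|^{−γ r} dx ≤ (r/(n−γ r)) · (∫_{ℝ^n} |∇f(x)|^p |x|^{−α p} dx)^{1/p} · (∫_{ℝ^n} |f(x)|^{p(r−1)/(p−1)} |x|^{−β} dx)^{(p−1)/p}. -/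
open Real MeasureTheory Set Metric Filter
open scoped ENNReal NNReal

lemma continuous_abs_rpow_mul {r : ℝ} (hr : 1 < r) :
    Continuous fun u : ℝ => |u| ^ (r - 2) * u := by
  rw [continuous_iff_continuousAt]
  intro u
  rcases eq_or_ne u 0 with rfl | hu
  · have hb : ∀ v : ℝ, ‖|v| ^ (r - 2) * v‖ ≤ |v| ^ (r - 1) := by
      intro v
      rcases eq_or_ne v 0 with rfl | hv
      · simp [Real.zero_rpow (by linarith : r - 1 ≠ 0)]
      · have h0 : (0:ℝ) < |v| := abs_pos.2 hv
        have key : |v| ^ (r - 2) * |v| = |v| ^ (r - 1) := by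
          rw [← Real.rpow_add_one (ne_of_gt h0)]; ring_nf
        rw [norm_mul, Real.norm_rpow_of_nonneg (abs_nonneg v), norm_eq_abs, abs_abs, norm_eq_abs,
          key]
    have ht : Filter.Tendsto (fun v : ℝ => |v| ^ (r - 1)) (nhds 0) (nhds 0) := by
      have h2 : Filter.Tendsto (fun v : ℝ => |v|) (nhds (0:ℝ)) (nhds (0:ℝ)) := by
        simpa using continuous_abs.tendsto (0:ℝ)
      have h1 : Filter.Tendsto (fun x : ℝ => x ^ (r - 1)) (nhds (0:ℝ)) (nhds (0:ℝ)) := by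
        have := Real.continuousAt_rpow_const 0 (r-1) (Or.inr (by linarith))
        simpa [ContinuousAt, Real.zero_rpow (by linarith : r - 1 ≠ 0)] using this
      exact h1.comp h2
    have := squeeze_zero_norm hb ht
    simpa [ContinuousAt] using this
  · exact ((Real.continuousAt_rpow_const _ _ (Or.inl (abs_ne_zero.2 hu))).comp
      continuous_abs.continuousAt).mul continuousAt_id

variable {F : Type*} [NormedAddCommGroup F] [InnerProductSpace ℝ F] [CompleteSpace F]

lemma norm_gradient_eq (f : F → ℝ) (x : F) : ‖gradient f x‖ = ‖fderiv ℝ f x‖ := by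
  show ‖(InnerProductSpace.toDual ℝ F).symm (fderiv ℝ f x)‖ = _
  exact LinearIsometryEquiv.norm_map _ _

lemma continuous_gradient (f : F → ℝ) (hf : ContDiff ℝ (⊤ : ℕ∞) f) : Continuous (gradient f) := by
  have : Continuous (fderiv ℝ f) := hf.continuous_fderiv (by simp)
  exact (InnerProductSpace.toDual ℝ F).symm.continuous.comp this

lemma ray_bound (f : F → ℝ) (hf : ContDiff ℝ (⊤ : ℕ∞) f) (hsupp : HasCompactSupport f)
    {r : ℝ} (hr : 1 < r) {ω : F} (hω : ‖ω‖ = 1) (t : ℝ) :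
    ENNReal.ofReal (|f (t • ω)| ^ r) ≤
      ∫⁻ s in Ioi t, ENNReal.ofReal (r * (|f (s • ω)| ^ (r-1) * ‖gradient f (s • ω)‖)) := by
  set h : ℝ → ℝ := fun s => f (s • ω) with hh
  have hc1 : Continuous h := hf.continuous.comp (continuous_id.smul continuous_const)
  have hcL : Continuous fun s : ℝ => fderiv ℝ f (s • ω) ω :=
    ((hf.continuous_fderiv (by simp)).comp (continuous_id.smul continuous_const)).clm_apply
      continuous_const
  have hd : ∀ s : ℝ, HasDerivAt h (fderiv ℝ f (s • ω) ω) s := by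
    intro s
    have h1 : HasDerivAt (fun s : ℝ => s • ω) ω s := by
      simpa using (hasDerivAt_id s).smul_const ω
    exact ((hf.differentiable (by simp) (s • ω)).hasFDerivAt).comp_hasDerivAt s h1
  set D : ℝ → ℝ := fun s => r * |h s| ^ (r - 2) * h s * (fderiv ℝ f (s • ω) ω) with hD
  have hg : ∀ s : ℝ, HasDerivAt (fun s => |h s| ^ r) (D s) s := by
    intro s
    have := (hasDerivAt_abs_rpow (h s) hr).comp s (hd s)
    simpa [hD, Function.comp_def, mul_assoc] using this
  set Bnd : ℝ → ℝ := fun s => r * (|h s| ^ (r-1) * ‖gradient f (s • ω)‖) with hB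
  have hBc : Continuous Bnd := by
    apply continuous_const.mul
    exact (hc1.abs.rpow_const fun s => Or.inr (by linarith)).mul
      ((continuous_gradient f hf).comp (continuous_id.smul continuous_const)).norm
  have hDB : ∀ s, |D s| ≤ Bnd s := by
    intro s
    have h2 : |fderiv ℝ f (s • ω) ω| ≤ ‖gradient f (s • ω)‖ := by
      rw [norm_gradient_eq]
      calc |fderiv ℝ f (s • ω) ω| ≤ ‖fderiv ℝ f (s • ω)‖ * ‖ω‖ :=
            (fderiv ℝ f (s • ω)).le_opNorm ω
        _ = ‖fderiv ℝ f (s • ω)‖ := by rw [hω, mul_one]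
    have habs : |D s| = r * |h s| ^ (r-2) * |h s| * |fderiv ℝ f (s • ω) ω| := by
      rw [hD, abs_mul, abs_mul, abs_mul, abs_of_nonneg (by linarith : (0:ℝ) ≤ r),
        abs_of_nonneg (Real.rpow_nonneg (abs_nonneg _) _)]
    rcases eq_or_ne (h s) 0 with h0 | h0
    · rw [habs, h0, abs_zero, mul_zero, zero_mul]
      have : (0:ℝ) ≤ Bnd s := by rw [hB]; positivity
      exact this
    · have hpos : (0:ℝ) < |h s| := abs_pos.2 h0
      have key : |h s| ^ (r - 2) * |h s| = |h s| ^ (r - 1) := by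
        rw [← Real.rpow_add_one (ne_of_gt hpos)]; ring_nf
      rw [habs, mul_assoc r, key, hB]
      have : r * |h s| ^ (r-1) * |fderiv ℝ f (s • ω) ω| ≤
          r * |h s| ^ (r-1) * ‖gradient f (s • ω)‖ := by
        apply mul_le_mul_of_nonneg_left h2; positivity
      calc r * (|h s| ^ (r-1)) * |fderiv ℝ f (s • ω) ω|
          ≤ r * |h s| ^ (r-1) * ‖gradient f (s • ω)‖ := this
        _ = r * (|h s| ^ (r-1) * ‖gradient f (s • ω)‖) := by ring
  have hDc : Continuous D := by
    have hq := (continuous_abs_rpow_mul hr).comp hc1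
    have : D = fun s => r * (|h s| ^ (r-2) * h s) * (fderiv ℝ f (s • ω) ω) := by
      funext s; rw [hD]; ring
    rw [this]
    exact (continuous_const.mul hq).mul hcL
  obtain ⟨R, hR⟩ := hsupp.isBounded.subset_closedBall 0
  set T : ℝ := max t (|R| + 1) with hT
  have htT : t ≤ T := le_max_left _ _
  have hhT : h T = 0 := by
    show f (T • ω) = 0
    apply image_eq_zero_of_notMem_tsupport
    intro hmem
    have h3 := hR hmem
    rw [mem_closedBall, dist_zero_right, norm_smul, hω, mul_one, Real.norm_eq_abs] at h3
    have h1 : |R| + 1 ≤ T := le_max_right _ _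
    have h2 : T ≤ |T| := le_abs_self T
    have h4 : T ≤ |R| := (h2.trans h3).trans (le_abs_self R)
    linarith
  have hFTC := intervalIntegral.integral_eq_sub_of_hasDerivAt (fun s _ => hg s)
    (hDc.intervalIntegrable t T)
  have hval : |h t| ^ r = ∫ s in t..T, (-D s) := by
    rw [intervalIntegral.integral_neg, hFTC, hhT, abs_zero,
      Real.zero_rpow (by linarith : r ≠ 0)]
    ring
  have hmono : ∫ s in t..T, (-D s) ≤ ∫ s in t..T, Bnd s := by
    apply intervalIntegral.integral_mono_on htT (hDc.neg.intervalIntegrable t T)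
      (hBc.intervalIntegrable t T)
    intro s _
    exact (neg_le_abs _).trans (hDB s)
  calc ENNReal.ofReal (|f (t • ω)| ^ r) = ENNReal.ofReal (|h t| ^ r) := rfl
    _ ≤ ENNReal.ofReal (∫ s in t..T, Bnd s) := ENNReal.ofReal_le_ofReal (hval ▸ hmono)
    _ = ENNReal.ofReal (∫ s in Ioc t T, Bnd s) := by rw [intervalIntegral.integral_of_le htT]
    _ = ∫⁻ s in Ioc t T, ENNReal.ofReal (Bnd s) := by
        apply MeasureTheory.ofReal_integral_eq_lintegral_ofReal
        · exact (hBc.integrableOn_Ioc)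
        · exact Filter.Eventually.of_forall fun s => by rw [hB]; positivity
    _ ≤ ∫⁻ s in Ioi t, ENNReal.ofReal (Bnd s) := lintegral_mono_set Ioc_subset_Ioi_self
    _ = ∫⁻ s in Ioi t, ENNReal.ofReal (r * (|f (s • ω)| ^ (r-1) * ‖gradient f (s • ω)‖)) := rfl

lemma lintegral_polar {E : Type*} [NormedAddCommGroup E] [NormedSpace ℝ E] [MeasurableSpace E]
    [BorelSpace E] [FiniteDimensional ℝ E] [Nontrivial E]
    (μ : Measure E) [μ.IsAddHaarMeasure] (G : E → ℝ≥0∞) (hG : Measurable G) :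
    ∫⁻ x, G x ∂μ = ∫⁻ ω : sphere (0:E) 1,
      (∫⁻ t in Ioi (0:ℝ), ENNReal.ofReal (t ^ (Module.finrank ℝ E - 1)) * G (t • (ω : E)))
      ∂μ.toSphere := by
  have hμ0 : μ {0} = 0 := measure_singleton 0
  have h0 : ∫⁻ x, G x ∂μ = ∫⁻ x in ({0}ᶜ : Set E), G x ∂μ := by
    rw [← lintegral_add_compl G (measurableSet_singleton 0),
      setLIntegral_measure_zero _ _ hμ0, zero_add]
  set Φ := homeomorphUnitSphereProd E
  set g : sphere (0:E) 1 × Ioi (0:ℝ) → ℝ≥0∞ := fun q => G ((q.2 : ℝ) • (q.1 : E)) with hg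
  have hgm : Measurable g := by
    apply hG.comp
    exact ((continuous_subtype_val.comp continuous_snd).smul
      (continuous_subtype_val.comp continuous_fst)).measurable
  have h1 : ∫⁻ x in ({0}ᶜ : Set E), G x ∂μ
      = ∫⁻ q, g q ∂(μ.toSphere.prod (.volumeIoiPow (Module.finrank ℝ E - 1))) := by
    rw [← lintegral_subtype_comap (measurableSet_singleton (0:E)).compl (fun x => G x),
      ← μ.measurePreserving_homeomorphUnitSphereProd.lintegral_comp hgm]
    apply lintegral_congr
    intro x
    show G x.val = G _
    congr 1
    simp only [Φ, homeomorphUnitSphereProd_apply_snd_coe, homeomorphUnitSphereProd_apply_fst_coe]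
    rw [smul_inv_smul₀ (norm_ne_zero_iff.2 x.2)]
  have h2 : ∫⁻ q, g q ∂(μ.toSphere.prod (.volumeIoiPow (Module.finrank ℝ E - 1)))
      = ∫⁻ ω : sphere (0:E) 1, ∫⁻ t : Ioi (0:ℝ), g (ω, t)
        ∂(Measure.volumeIoiPow (Module.finrank ℝ E - 1)) ∂μ.toSphere :=
    lintegral_prod _ hgm.aemeasurable
  have h3 : ∀ ω : sphere (0:E) 1,
      ∫⁻ t : Ioi (0:ℝ), g (ω, t) ∂(Measure.volumeIoiPow (Module.finrank ℝ E - 1))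
      = ∫⁻ t in Ioi (0:ℝ), ENNReal.ofReal (t ^ (Module.finrank ℝ E - 1)) * G (t • (ω : E)) := by
    intro ω
    rw [Measure.volumeIoiPow]
    rw [lintegral_withDensity_eq_lintegral_mul _ (by fun_prop) (by
      apply hG.comp
      show Measurable fun t : Ioi (0:ℝ) => (t : ℝ) • (ω : E)
      exact (continuous_subtype_val.smul continuous_const).measurable)]
    rw [← lintegral_subtype_comap measurableSet_Ioi
      (fun t : ℝ => ENNReal.ofReal (t ^ (Module.finrank ℝ E - 1)) * G (t • (ω : E)))]
    rfl
  rw [h0, h1, h2]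
  exact lintegral_congr h3

lemma measurable_rpow_const' (c : ℝ) : Measurable fun x : ℝ => x ^ c := by
  have heq : (fun x : ℝ => x ^ c) = fun x =>
      if x = 0 then (if c = 0 then 1 else 0)
      else Real.exp (Real.log x * c) * (if x < 0 then Real.cos (c * π) else 1) := by
    funext x
    rcases lt_trichotomy x 0 with hx | rfl | hx
    · rw [if_neg hx.ne, if_pos hx, Real.rpow_def_of_neg hx]
    · rw [if_pos rfl]
      rcases eq_or_ne c 0 with rfl | hc
      · simp [Real.rpow_zero]
      · simp [Real.zero_rpow hc, hc]
    · rw [if_neg hx.ne', if_neg (not_lt.2 hx.le), Real.rpow_def_of_pos hx, mul_one]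
  rw [heq]
  have h0 : MeasurableSet {x : ℝ | x = 0} := by
    simp only [Set.setOf_eq_eq_singleton]; exact MeasurableSet.singleton (0:ℝ)
  exact Measurable.ite h0 measurable_const
    ((Real.measurable_exp.comp (Real.measurable_log.mul_const c)).mul
      (Measurable.ite measurableSet_Iio measurable_const measurable_const))

lemma tonelli_ray {c : ℝ} (hc : 0 < c) (h₀ : ℝ → ℝ≥0∞) (hm : Measurable h₀) :
    ∫⁻ t in Ioi (0:ℝ), ENNReal.ofReal (t ^ (c-1)) * ∫⁻ s in Ioi t, h₀ s
    = ENNReal.ofReal c⁻¹ * ∫⁻ s in Ioi (0:ℝ), ENNReal.ofReal (s ^ c) * h₀ s := by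
  set K : ℝ × ℝ → ℝ≥0∞ :=
    ({q : ℝ × ℝ | q.1 < q.2}).indicator (fun q => ENNReal.ofReal (q.1 ^ (c-1)) * h₀ q.2) with hK
  have hKm : Measurable K := by
    apply Measurable.indicator
    · exact (((measurable_rpow_const' (c-1)).comp measurable_fst).ennreal_ofReal).mul
        (hm.comp measurable_snd)
    · exact measurableSet_lt measurable_fst measurable_snd
  have hL : ∫⁻ t in Ioi (0:ℝ), ENNReal.ofReal (t ^ (c-1)) * ∫⁻ s in Ioi t, h₀ s
      = ∫⁻ t in Ioi (0:ℝ), ∫⁻ s in Ioi (0:ℝ), K (t, s) := by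
    apply lintegral_congr_ae
    filter_upwards [ae_restrict_mem measurableSet_Ioi] with t ht
    have hKt : (fun s => K (t, s)) = (Ioi t).indicator
        (fun s => ENNReal.ofReal (t ^ (c-1)) * h₀ s) := by
      funext s
      by_cases hts : t < s
      · simp [hK, indicator_of_mem, hts, mem_Ioi]
      · simp [hK, indicator_of_notMem, hts, mem_Ioi]
    rw [hKt, lintegral_indicator measurableSet_Ioi, Measure.restrict_restrict measurableSet_Ioi,
      inter_eq_left.2 (Ioi_subset_Ioi (le_of_lt ht)),
      lintegral_const_mul' _ _ ENNReal.ofReal_ne_top]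
  have hswap : ∫⁻ t in Ioi (0:ℝ), ∫⁻ s in Ioi (0:ℝ), K (t, s)
      = ∫⁻ s in Ioi (0:ℝ), ∫⁻ t in Ioi (0:ℝ), K (t, s) :=
    lintegral_lintegral_swap hKm.aemeasurable
  have hR : ∫⁻ s in Ioi (0:ℝ), ∫⁻ t in Ioi (0:ℝ), K (t, s)
      = ∫⁻ s in Ioi (0:ℝ), ENNReal.ofReal c⁻¹ * (ENNReal.ofReal (s ^ c) * h₀ s) := by
    apply lintegral_congr_ae
    filter_upwards [ae_restrict_mem measurableSet_Ioi] with s hs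
    have hs0 : (0:ℝ) < s := hs
    have hKs : (fun t => K (t, s)) = (Iio s).indicator
        (fun t => ENNReal.ofReal (t ^ (c-1)) * h₀ s) := by
      funext t
      by_cases hts : t < s
      · simp [hK, indicator_of_mem, hts, mem_Iio]
      · simp [hK, indicator_of_notMem, hts, mem_Iio]
    rw [hKs, lintegral_indicator measurableSet_Iio, Measure.restrict_restrict measurableSet_Iio,
      Iio_inter_Ioi, lintegral_mul_const _ (measurable_rpow_const' (c-1)).ennreal_ofReal]
    have hint : IntegrableOn (fun t : ℝ => t ^ (c-1)) (Ioo 0 s) := by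
      have h5 := (intervalIntegral.intervalIntegrable_rpow' (a := 0) (b := s)
        (by linarith : (-1:ℝ) < c - 1))
      rw [intervalIntegrable_iff_integrableOn_Ioc_of_le hs0.le] at h5
      exact h5.mono_set Ioo_subset_Ioc_self
    have hval : ∫ t in Ioo 0 s, t ^ (c-1) = s ^ c / c := by
      rw [← integral_Ioc_eq_integral_Ioo, ← intervalIntegral.integral_of_le hs0.le,
        integral_rpow (Or.inl (by linarith : (-1:ℝ) < c - 1))]
      rw [Real.zero_rpow (by linarith : c - 1 + 1 ≠ 0)]
      norm_num
    have hW : ∫⁻ t in Ioo 0 s, ENNReal.ofReal (t ^ (c-1)) = ENNReal.ofReal (s ^ c / c) := by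
      rw [← ofReal_integral_eq_lintegral_ofReal hint]
      · rw [hval]
      · filter_upwards [ae_restrict_mem measurableSet_Ioo] with t ht
        exact Real.rpow_nonneg ht.1.le _
    rw [hW]
    rw [div_eq_inv_mul, ENNReal.ofReal_mul (by positivity), mul_comm (ENNReal.ofReal (s^c)) (h₀ s),
      ← mul_assoc, mul_comm _ (h₀ s)]
    ring
  rw [hL, hswap, hR, lintegral_const_mul' _ _ ENNReal.ofReal_ne_top]

lemma lintegral_polar_finite {E : Type*} [NormedAddCommGroup E] [NormedSpace ℝ E]
    [MeasurableSpace E] [BorelSpace E] [FiniteDimensional ℝ E] [Nontrivial E]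
    (μ : Measure E) [μ.IsAddHaarMeasure] (g : E → ℝ) (hg : Continuous g)
    (hcs : HasCompactSupport g) {δ : ℝ} (hδ : δ < Module.finrank ℝ E) :
    ∫⁻ x, ENNReal.ofReal (g x * ‖x‖ ^ (-δ)) ∂μ < ⊤ := by
  set m := Module.finrank ℝ E with hm
  have hm1 : 1 ≤ m := Module.finrank_pos
  have hGm : Measurable fun x : E => ENNReal.ofReal (g x * ‖x‖ ^ (-δ)) :=
    ((hg.measurable.mul ((measurable_rpow_const' (-δ)).comp measurable_norm))).ennreal_ofReal
  obtain ⟨M, hM⟩ := hcs.exists_bound_of_continuous hg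
  have hM0 : 0 ≤ M := le_trans (norm_nonneg _) (hM 0)
  obtain ⟨R, hR⟩ := hcs.isBounded.subset_closedBall 0
  set R' := |R| with hR'
  set e : ℝ := (m : ℝ) - 1 - δ with he
  have he1 : (-1:ℝ) < e := by
    have : (1:ℝ) ≤ (m:ℝ) := by exact_mod_cast hm1
    simp only [he]; linarith
  -- the constant
  set C : ℝ≥0∞ := ENNReal.ofReal (∫ t in Ioc (0:ℝ) R', M * t ^ e) with hC
  have key : ∀ ω : sphere (0:E) 1, (∫⁻ t in Ioi (0:ℝ),
      ENNReal.ofReal (t ^ (m - 1)) * ENNReal.ofReal (g (t • (ω:E)) * ‖t • (ω:E)‖ ^ (-δ))) ≤ C := by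
    intro ω
    have hω : ‖(ω:E)‖ = 1 := by
      have := ω.2
      rwa [mem_sphere_zero_iff_norm] at this
    have hbound : ∀ t ∈ Ioi (0:ℝ), ENNReal.ofReal (t ^ (m - 1)) *
        ENNReal.ofReal (g (t • (ω:E)) * ‖t • (ω:E)‖ ^ (-δ))
        ≤ (Ioc (0:ℝ) R').indicator (fun t => ENNReal.ofReal (M * t ^ e)) t := by
      intro t ht
      have ht0 : (0:ℝ) < t := ht
      have hnorm : ‖t • (ω:E)‖ = t := by
        rw [norm_smul, hω, mul_one, Real.norm_eq_abs, abs_of_pos ht0]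
      by_cases htR : t ≤ R'
      · rw [indicator_of_mem (by exact ⟨ht0, htR⟩ : t ∈ Ioc (0:ℝ) R')]
        rw [← ENNReal.ofReal_mul (by positivity)]
        apply ENNReal.ofReal_le_ofReal
        rw [hnorm]
        have h1 : g (t • (ω:E)) ≤ M := le_trans (le_abs_self _) (hM _)
        have h2 : t ^ (m-1) * (g (t • (ω:E)) * t ^ (-δ)) ≤ t ^ (m-1) * (M * t ^ (-δ)) := by
          apply mul_le_mul_of_nonneg_left _ (by positivity)
          exact mul_le_mul_of_nonneg_right h1 (by positivity)
        refine h2.trans (le_of_eq ?_)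
        have hcast : (t : ℝ) ^ (m - 1) = t ^ ((m:ℝ) - 1) := by
          rw [← Real.rpow_natCast t (m-1), Nat.cast_sub hm1, Nat.cast_one]
        rw [hcast, ← mul_assoc, mul_comm (t ^ ((m:ℝ)-1)) M, mul_assoc,
          ← Real.rpow_add ht0, he]
        ring_nf
      · rw [indicator_of_notMem (by simp [mem_Ioc, htR] : t ∉ Ioc (0:ℝ) R')]
        have hzero : g (t • (ω:E)) = 0 := by
          apply image_eq_zero_of_notMem_tsupport
          intro hmem
          have h3 := hR hmem
          rw [mem_closedBall, dist_zero_right, hnorm] at h3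
          exact htR (h3.trans (le_abs_self R))
        rw [hzero, zero_mul, ENNReal.ofReal_zero, mul_zero]
    calc (∫⁻ t in Ioi (0:ℝ), ENNReal.ofReal (t ^ (m - 1)) *
        ENNReal.ofReal (g (t • (ω:E)) * ‖t • (ω:E)‖ ^ (-δ)))
        ≤ ∫⁻ t in Ioi (0:ℝ), (Ioc (0:ℝ) R').indicator (fun t => ENNReal.ofReal (M * t ^ e)) t := by
          apply lintegral_mono_ae
          filter_upwards [ae_restrict_mem measurableSet_Ioi] with t ht
          exact hbound t ht
      _ = ∫⁻ t in Ioc (0:ℝ) R', ENNReal.ofReal (M * t ^ e) := by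
          rw [lintegral_indicator measurableSet_Ioc,
            Measure.restrict_restrict measurableSet_Ioc,
            inter_eq_left.2 (fun x hx => hx.1)]
      _ ≤ C := by
          rcases le_or_gt R' 0 with hneg | hpos
          · rw [Ioc_eq_empty (by linarith : ¬ (0:ℝ) < R')]
            simp
          · have hint : IntegrableOn (fun t : ℝ => M * t ^ e) (Ioc 0 R') := by
              have h5 := (intervalIntegral.intervalIntegrable_rpow' (a := 0) (b := R') he1)
              rw [intervalIntegrable_iff_integrableOn_Ioc_of_le hpos.le] at h5
              exact h5.const_mul M
            rw [hC, ← ofReal_integral_eq_lintegral_ofReal hint]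
            · filter_upwards [ae_restrict_mem measurableSet_Ioc] with t ht
              have : (0:ℝ) < t := ht.1
              positivity
  have := lintegral_polar μ _ hGm
  rw [this]
  calc ∫⁻ ω : sphere (0:E) 1, (∫⁻ t in Ioi (0:ℝ),
        ENNReal.ofReal (t ^ (m - 1)) * ENNReal.ofReal (g (t • (ω:E)) * ‖t • (ω:E)‖ ^ (-δ)))
        ∂μ.toSphere
      ≤ ∫⁻ _ : sphere (0:E) 1, C ∂μ.toSphere := lintegral_mono key
    _ = C * μ.toSphere univ := lintegral_const C
    _ < ⊤ := ENNReal.mul_lt_top ENNReal.ofReal_lt_top (measure_lt_top _ _)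

/-- Caffarelli–Kohn–Nirenberg inequality of Xia type on ℝⁿ with the full gradient. -/
theorem ckn_gradient
    (n : ℕ) (hn : 2 ≤ n) (p r α β γ : ℝ) (hp : 1 < p) (hr : 1 < r)
    (h1 : 0 < 1/r - γ/n) (h2 : 0 < 1/p - α/n) (h3 : 0 < 1 - β/n)
    (hbal : γ = (1+α)/r + ((p-1)/(p*r)) * β)
    (f : EuclideanSpace ℝ (Fin n) → ℝ) (hf : ContDiff ℝ (⊤ : ℕ∞) f)
    (hsupp : HasCompactSupport f) :
    ∫ x : EuclideanSpace ℝ (Fin n), |f x| ^ r * ‖x‖ ^ (-(γ * r)) ≤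
      (r / (n - γ * r)) *
        (∫ x : EuclideanSpace ℝ (Fin n), ‖gradient f x‖ ^ p * ‖x‖ ^ (-(α * p))) ^ (1/p) *
        (∫ x : EuclideanSpace ℝ (Fin n), |f x| ^ (p * (r-1) / (p-1)) * ‖x‖ ^ (-β)) ^ ((p-1)/p) := by
  haveI : Nonempty (Fin n) := Fin.pos_iff_nonempty.mp (by omega)
  haveI : Nontrivial (EuclideanSpace ℝ (Fin n)) :=
    inferInstance
  have hfr : Module.finrank ℝ (EuclideanSpace ℝ (Fin n)) = n := finrank_euclideanSpace_fin
  -- basic numeric facts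
  have hr0 : (0:ℝ) < r := lt_trans one_pos hr
  have hp0 : (0:ℝ) < p := lt_trans one_pos hp
  have hp1 : (0:ℝ) < p - 1 := by linarith
  have hn0 : (0:ℝ) < n := by
    have : (2:ℝ) ≤ n := by exact_mod_cast hn
    linarith
  set c : ℝ := (n:ℝ) - γ * r with hcdef
  have hc : 0 < c := by
    have h := mul_pos h1 (mul_pos hr0 hn0)
    have heq : (1/r - γ/(n:ℝ)) * (r * n) = (n:ℝ) - γ * r := by field_simp
    rw [heq] at h; exact h
  have hαp : α * p < n := by
    have h := mul_pos h2 (mul_pos hp0 hn0)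
    have heq : (1/p - α/(n:ℝ)) * (p * n) = (n:ℝ) - α * p := by field_simp
    rw [heq] at h; linarith
  have hβn : β < n := by
    have h := mul_pos h3 hn0
    have heq : (1 - β/(n:ℝ)) * n = (n:ℝ) - β := by field_simp
    rw [heq] at h; linarith
  have hbal2 : -α - β * (p-1) / p = 1 - γ * r := by
    have : γ * r = 1 + α + β * (p-1) / p := by
      rw [hbal]; field_simp
    linarith
  -- continuity facts
  have hfc : Continuous f := hf.continuous
  have hgc : Continuous (gradient f) := continuous_gradient f hf
  have hgrad_eq : gradient f = (⇑(InnerProductSpace.toDual ℝ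
      (EuclideanSpace ℝ (Fin n))).symm) ∘ (fderiv ℝ f) := rfl
  have hgs : HasCompactSupport (gradient f) := by
    rw [hgrad_eq]
    exact (hsupp.fderiv (𝕜 := ℝ)).comp_left (map_zero _)
  -- the functions
  set A : EuclideanSpace ℝ (Fin n) → ℝ := fun x => |f x| ^ r * ‖x‖ ^ (-(γ * r)) with hA
  set u : EuclideanSpace ℝ (Fin n) → ℝ := fun x => ‖gradient f x‖ * ‖x‖ ^ (-α) with hu
  set v : EuclideanSpace ℝ (Fin n) → ℝ :=
    fun x => |f x| ^ (r-1) * ‖x‖ ^ (-(β * (p-1) / p)) with hv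
  set P : EuclideanSpace ℝ (Fin n) → ℝ := fun x => ‖gradient f x‖ ^ p * ‖x‖ ^ (-(α * p)) with hP
  set Q : EuclideanSpace ℝ (Fin n) → ℝ :=
    fun x => |f x| ^ (p * (r-1) / (p-1)) * ‖x‖ ^ (-β) with hQ
  -- measurability
  have hAm : Measurable fun x => ENNReal.ofReal (A x) := by
    exact (((measurable_rpow_const' r).comp hfc.measurable.abs).mul
      ((measurable_rpow_const' (-(γ*r))).comp measurable_norm)).ennreal_ofReal
  have hum : Measurable fun x => ENNReal.ofReal (u x) := by
    exact ((hgc.measurable.norm.mul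
      ((measurable_rpow_const' (-α)).comp measurable_norm))).ennreal_ofReal
  have hvm : Measurable fun x => ENNReal.ofReal (v x) := by
    exact (((measurable_rpow_const' (r-1)).comp hfc.measurable.abs).mul
      ((measurable_rpow_const' (-(β * (p-1) / p))).comp measurable_norm)).ennreal_ofReal
  have hUVm : Measurable fun x => ENNReal.ofReal (u x) * ENNReal.ofReal (v x) := hum.mul hvm
  set LA := ∫⁻ x, ENNReal.ofReal (A x) with hLA
  set LUV := ∫⁻ x, ENNReal.ofReal (u x) * ENNReal.ofReal (v x) with hLUV
  set LP := ∫⁻ x, ENNReal.ofReal (P x) with hLP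
  set LQ := ∫⁻ x, ENNReal.ofReal (Q x) with hLQ
  -- Step 1 : LA ≤ ofReal (r/c) * LUV
  have step1 : LA ≤ ENNReal.ofReal (r / c) * LUV := by
    rw [hLA, hLUV, lintegral_polar volume _ hAm, lintegral_polar volume _ hUVm]
    simp only [hfr]
    have hωbound : ∀ ω : sphere (0 : EuclideanSpace ℝ (Fin n)) 1,
        (∫⁻ t in Ioi (0:ℝ), ENNReal.ofReal (t ^ (n - 1)) *
          ENNReal.ofReal (A (t • (ω : EuclideanSpace ℝ (Fin n)))))
        ≤ ENNReal.ofReal (r / c) * ∫⁻ t in Ioi (0:ℝ), ENNReal.ofReal (t ^ (n - 1)) *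
          (ENNReal.ofReal (u (t • (ω : EuclideanSpace ℝ (Fin n)))) *
           ENNReal.ofReal (v (t • (ω : EuclideanSpace ℝ (Fin n))))) := by
      intro ω
      have hω : ‖(ω : EuclideanSpace ℝ (Fin n))‖ = 1 := by
        have := ω.2; rwa [mem_sphere_zero_iff_norm] at this
      set h₀ : ℝ → ℝ≥0∞ := fun s => ENNReal.ofReal (r *
        (|f (s • (ω : EuclideanSpace ℝ (Fin n)))| ^ (r-1) *
         ‖gradient f (s • (ω : EuclideanSpace ℝ (Fin n)))‖)) with hh₀
      have h₀m : Measurable h₀ := by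
        apply Continuous.measurable
        exact ENNReal.continuous_ofReal.comp
          ((continuous_const.mul (((hfc.comp (continuous_id.smul continuous_const)).abs.rpow_const
          (fun s => Or.inr (by linarith : (0:ℝ) ≤ r - 1))).mul
          ((hgc.comp (continuous_id.smul continuous_const)).norm))))
      have hcast : ∀ t : ℝ, 0 < t → (t : ℝ) ^ (n - 1) = t ^ ((n:ℝ) - 1) := by
        intro t ht
        rw [← Real.rpow_natCast t (n-1), Nat.cast_sub (by omega : 1 ≤ n), Nat.cast_one]
      have hstep1a : (∫⁻ t in Ioi (0:ℝ), ENNReal.ofReal (t ^ (n - 1)) *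
          ENNReal.ofReal (A (t • (ω : EuclideanSpace ℝ (Fin n)))))
          ≤ ∫⁻ t in Ioi (0:ℝ), ENNReal.ofReal (t ^ (c - 1)) * ∫⁻ s in Ioi t, h₀ s := by
        apply lintegral_mono_ae
        filter_upwards [ae_restrict_mem measurableSet_Ioi] with t ht
        have ht0 : (0:ℝ) < t := ht
        have hnorm : ‖t • (ω : EuclideanSpace ℝ (Fin n))‖ = t := by
          rw [norm_smul, hω, mul_one, Real.norm_eq_abs, abs_of_pos ht0]
        have key : t ^ (n - 1) * A (t • (ω : EuclideanSpace ℝ (Fin n)))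
            = t ^ (c - 1) * |f (t • (ω : EuclideanSpace ℝ (Fin n)))| ^ r := by
          simp only [hA]
          rw [hnorm, hcast t ht0]
          rw [mul_comm (|f (t • (ω : EuclideanSpace ℝ (Fin n)))| ^ r) (t ^ (-(γ*r))),
            ← mul_assoc, ← Real.rpow_add ht0]
          congr 2
          rw [hcdef]; ring
        calc ENNReal.ofReal (t ^ (n - 1)) *
              ENNReal.ofReal (A (t • (ω : EuclideanSpace ℝ (Fin n))))
            = ENNReal.ofReal (t ^ (c-1)) *
              ENNReal.ofReal (|f (t • (ω : EuclideanSpace ℝ (Fin n)))| ^ r) := by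
              rw [← ENNReal.ofReal_mul (by positivity), key,
                ENNReal.ofReal_mul (by positivity)]
          _ ≤ ENNReal.ofReal (t ^ (c-1)) * ∫⁻ s in Ioi t, h₀ s := by
              apply mul_le_mul_right
              exact ray_bound f hf hsupp hr hω t
      have hton := tonelli_ray hc h₀ h₀m
      have hstep1b : (∫⁻ s in Ioi (0:ℝ), ENNReal.ofReal (s ^ c) * h₀ s)
          = ENNReal.ofReal r * ∫⁻ s in Ioi (0:ℝ), ENNReal.ofReal (s ^ (n - 1)) *
            (ENNReal.ofReal (u (s • (ω : EuclideanSpace ℝ (Fin n)))) *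
             ENNReal.ofReal (v (s • (ω : EuclideanSpace ℝ (Fin n))))) := by
        rw [← lintegral_const_mul' _ _ ENNReal.ofReal_ne_top]
        apply lintegral_congr_ae
        filter_upwards [ae_restrict_mem measurableSet_Ioi] with s hs
        have hs0 : (0:ℝ) < s := hs
        have hnorm : ‖s • (ω : EuclideanSpace ℝ (Fin n))‖ = s := by
          rw [norm_smul, hω, mul_one, Real.norm_eq_abs, abs_of_pos hs0]
        have keyexp : s ^ ((n:ℝ) - 1) * (s ^ (-α) * s ^ (-(β * (p-1) / p))) = s ^ c := by
          rw [← Real.rpow_add hs0, ← Real.rpow_add hs0]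
          congr 1
          rw [hcdef]; linarith [hbal2]
        have keyreal : s ^ c * (r * (|f (s • (ω : EuclideanSpace ℝ (Fin n)))| ^ (r-1) *
            ‖gradient f (s • (ω : EuclideanSpace ℝ (Fin n)))‖))
            = r * (s ^ (n-1) * (u (s • (ω : EuclideanSpace ℝ (Fin n))) *
              v (s • (ω : EuclideanSpace ℝ (Fin n))))) := by
          simp only [hu, hv]
          rw [hnorm, hcast s hs0, ← keyexp]
          ring
        rw [hh₀]
        rw [← ENNReal.ofReal_mul (by positivity), keyreal,
          ENNReal.ofReal_mul (le_of_lt hr0), ENNReal.ofReal_mul (by positivity),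
          ENNReal.ofReal_mul (by positivity)]
      calc (∫⁻ t in Ioi (0:ℝ), ENNReal.ofReal (t ^ (n - 1)) *
            ENNReal.ofReal (A (t • (ω : EuclideanSpace ℝ (Fin n)))))
          ≤ ∫⁻ t in Ioi (0:ℝ), ENNReal.ofReal (t ^ (c - 1)) * ∫⁻ s in Ioi t, h₀ s := hstep1a
        _ = ENNReal.ofReal c⁻¹ * ∫⁻ s in Ioi (0:ℝ), ENNReal.ofReal (s ^ c) * h₀ s := hton
        _ = ENNReal.ofReal c⁻¹ * (ENNReal.ofReal r *
            ∫⁻ t in Ioi (0:ℝ), ENNReal.ofReal (t ^ (n - 1)) *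
            (ENNReal.ofReal (u (t • (ω : EuclideanSpace ℝ (Fin n)))) *
             ENNReal.ofReal (v (t • (ω : EuclideanSpace ℝ (Fin n)))))) := by rw [hstep1b]
        _ = ENNReal.ofReal (r / c) * ∫⁻ t in Ioi (0:ℝ), ENNReal.ofReal (t ^ (n - 1)) *
            (ENNReal.ofReal (u (t • (ω : EuclideanSpace ℝ (Fin n)))) *
             ENNReal.ofReal (v (t • (ω : EuclideanSpace ℝ (Fin n))))) := by
            rw [← mul_assoc, ← ENNReal.ofReal_mul (by positivity)]
            congr 2
            rw [div_eq_mul_inv]; ring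
    calc (∫⁻ ω : sphere (0 : EuclideanSpace ℝ (Fin n)) 1,
          (∫⁻ t in Ioi (0:ℝ), ENNReal.ofReal (t ^ (n - 1)) *
            ENNReal.ofReal (A (t • (ω : EuclideanSpace ℝ (Fin n))))) ∂volume.toSphere)
        ≤ ∫⁻ ω : sphere (0 : EuclideanSpace ℝ (Fin n)) 1,
          (ENNReal.ofReal (r / c) * ∫⁻ t in Ioi (0:ℝ), ENNReal.ofReal (t ^ (n - 1)) *
          (ENNReal.ofReal (u (t • (ω : EuclideanSpace ℝ (Fin n)))) *
           ENNReal.ofReal (v (t • (ω : EuclideanSpace ℝ (Fin n)))))) ∂volume.toSphere :=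
          lintegral_mono hωbound
      _ = ENNReal.ofReal (r / c) * ∫⁻ ω : sphere (0 : EuclideanSpace ℝ (Fin n)) 1,
          (∫⁻ t in Ioi (0:ℝ), ENNReal.ofReal (t ^ (n - 1)) *
          (ENNReal.ofReal (u (t • (ω : EuclideanSpace ℝ (Fin n)))) *
           ENNReal.ofReal (v (t • (ω : EuclideanSpace ℝ (Fin n)))))) ∂volume.toSphere :=
          lintegral_const_mul' _ _ ENNReal.ofReal_ne_top
  -- Step 2 : Hölder
  have hpq : p.HolderConjugate (p / (p-1)) := Real.HolderConjugate.conjExponent hp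
  have hup : ∀ x, (ENNReal.ofReal (u x)) ^ p = ENNReal.ofReal (P x) := by
    intro x
    rw [ENNReal.ofReal_rpow_of_nonneg (show 0 ≤ u x by simp only [hu]; positivity) hp0.le]
    congr 1
    simp only [hu, hP]
    rw [Real.mul_rpow (norm_nonneg _) (Real.rpow_nonneg (norm_nonneg _) _),
      ← Real.rpow_mul (norm_nonneg x), neg_mul]
  have hq1 : (r-1) * (p/(p-1)) = p * (r-1) / (p-1) := by field_simp
  have hq2 : (-(β * (p-1) / p)) * (p/(p-1)) = -β := by field_simp
  have hvq : ∀ x, (ENNReal.ofReal (v x)) ^ (p/(p-1)) = ENNReal.ofReal (Q x) := by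
    intro x
    rw [ENNReal.ofReal_rpow_of_nonneg (show 0 ≤ v x by simp only [hv]; positivity)
      (by positivity)]
    congr 1
    simp only [hv, hQ]
    rw [Real.mul_rpow (by positivity) (Real.rpow_nonneg (norm_nonneg _) _),
      ← Real.rpow_mul (abs_nonneg (f x)), ← Real.rpow_mul (norm_nonneg x), hq1, hq2]
  have step2 : LUV ≤ LP ^ (1/p) * LQ ^ ((p-1)/p) := by
    have hH := ENNReal.lintegral_mul_le_Lp_mul_Lq volume hpq
      hum.aemeasurable hvm.aemeasurable
    have e1 : (∫⁻ x, (ENNReal.ofReal (u x)) ^ p) = LP := by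
      rw [hLP]; exact lintegral_congr hup
    have e2 : (∫⁻ x, (ENNReal.ofReal (v x)) ^ (p/(p-1))) = LQ := by
      rw [hLQ]; exact lintegral_congr hvq
    have e3 : 1 / (p/(p-1)) = (p-1)/p := one_div_div _ _
    rw [hLUV]
    calc (∫⁻ x, ENNReal.ofReal (u x) * ENNReal.ofReal (v x))
        = ∫⁻ x, ((fun x => ENNReal.ofReal (u x)) * fun x => ENNReal.ofReal (v x)) x := rfl
      _ ≤ (∫⁻ x, (ENNReal.ofReal (u x)) ^ p) ^ (1/p) *
          (∫⁻ x, (ENNReal.ofReal (v x)) ^ (p/(p-1))) ^ (1/(p/(p-1))) := hH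
      _ = LP ^ (1/p) * LQ ^ ((p-1)/p) := by rw [e1, e2, e3]
  -- Step 3/4 : finiteness
  have step3 : LP < ⊤ := by
    rw [hLP]
    have hPc : Continuous fun x : EuclideanSpace ℝ (Fin n) => ‖gradient f x‖ ^ p :=
      hgc.norm.rpow_const (fun x => Or.inr hp0.le)
    have hPs : HasCompactSupport fun x : EuclideanSpace ℝ (Fin n) => ‖gradient f x‖ ^ p := by
      have h4 : HasCompactSupport fun x => ‖gradient f x‖ := hgs.norm
      exact h4.comp_left (g := fun t : ℝ => t ^ p) (Real.zero_rpow hp0.ne')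
    have := lintegral_polar_finite volume _ hPc hPs
      (δ := α * p) (by rw [hfr]; exact hαp)
    exact this
  have step4 : LQ < ⊤ := by
    rw [hLQ]
    have he : (0:ℝ) < p * (r-1) / (p-1) := div_pos (mul_pos hp0 (by linarith)) hp1
    have hQc : Continuous fun x : EuclideanSpace ℝ (Fin n) => |f x| ^ (p * (r-1) / (p-1)) :=
      hfc.abs.rpow_const (fun x => Or.inr he.le)
    have hQs : HasCompactSupport fun x : EuclideanSpace ℝ (Fin n) =>
        |f x| ^ (p * (r-1) / (p-1)) := by
      have h4 : HasCompactSupport fun x => |f x| := hsupp.comp_left (g := fun t : ℝ => |t|) abs_zero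
      exact h4.comp_left (g := fun t : ℝ => t ^ (p * (r-1) / (p-1))) (Real.zero_rpow he.ne')
    have := lintegral_polar_finite volume _ hQc hQs (δ := β) (by rw [hfr]; exact hβn)
    exact this
  -- final conversion
  have hrc0 : 0 ≤ r / c := div_nonneg hr0.le hc.le
  have hchain : LA ≤ ENNReal.ofReal (r / c) * (LP ^ (1/p) * LQ ^ ((p-1)/p)) :=
    step1.trans (mul_le_mul_right step2 _)
  have hPfin : LP ^ (1/p) ≠ ⊤ :=
    (ENNReal.rpow_lt_top_of_nonneg (by positivity) step3.ne).ne
  have hQfin : LQ ^ ((p-1)/p) ≠ ⊤ :=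
    (ENNReal.rpow_lt_top_of_nonneg (by positivity) step4.ne).ne
  have hRfin : ENNReal.ofReal (r / c) * (LP ^ (1/p) * LQ ^ ((p-1)/p)) ≠ ⊤ :=
    ENNReal.mul_ne_top ENNReal.ofReal_ne_top (ENNReal.mul_ne_top hPfin hQfin)
  have htoReal := ENNReal.toReal_mono hRfin hchain
  rw [ENNReal.toReal_mul, ENNReal.toReal_mul, ENNReal.toReal_ofReal hrc0,
    ← ENNReal.toReal_rpow, ← ENNReal.toReal_rpow] at htoReal
  have hintA : ∫ x : EuclideanSpace ℝ (Fin n), |f x| ^ r * ‖x‖ ^ (-(γ * r)) = LA.toReal := by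
    rw [hLA]
    have h9 := integral_eq_lintegral_of_nonneg_ae (μ := volume)
      (f := fun x : EuclideanSpace ℝ (Fin n) => |f x| ^ r * ‖x‖ ^ (-(γ * r)))
      (Filter.Eventually.of_forall fun x => by positivity)
      ((((measurable_rpow_const' r).comp hfc.measurable.abs).mul
        ((measurable_rpow_const' (-(γ*r))).comp measurable_norm)).aestronglyMeasurable)
    simp only [hA]
    exact h9
  have hintP : ∫ x : EuclideanSpace ℝ (Fin n), ‖gradient f x‖ ^ p * ‖x‖ ^ (-(α * p))
      = LP.toReal := by
    rw [hLP]
    have h9 := integral_eq_lintegral_of_nonneg_ae (μ := volume)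
      (f := fun x : EuclideanSpace ℝ (Fin n) => ‖gradient f x‖ ^ p * ‖x‖ ^ (-(α * p)))
      (Filter.Eventually.of_forall fun x => by positivity)
      ((((measurable_rpow_const' p).comp hgc.measurable.norm).mul
        ((measurable_rpow_const' (-(α*p))).comp measurable_norm)).aestronglyMeasurable)
    simp only [hP]
    exact h9
  have hintQ : ∫ x : EuclideanSpace ℝ (Fin n), |f x| ^ (p * (r-1) / (p-1)) * ‖x‖ ^ (-β)
      = LQ.toReal := by
    rw [hLQ]
    have h9 := integral_eq_lintegral_of_nonneg_ae (μ := volume)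
      (f := fun x : EuclideanSpace ℝ (Fin n) => |f x| ^ (p * (r-1) / (p-1)) * ‖x‖ ^ (-β))
      (Filter.Eventually.of_forall fun x => by positivity)
      ((((measurable_rpow_const' (p * (r-1) / (p-1))).comp hfc.measurable.abs).mul
        ((measurable_rpow_const' (-β)).comp measurable_norm)).aestronglyMeasurable)
    simp only [hQ]
    exact h9
  rw [hintA, hintP, hintQ]
  calc LA.toReal ≤ r / c * (LP.toReal ^ (1/p) * LQ.toReal ^ ((p-1)/p)) := htoReal
    _ = r / ((n:ℝ) - γ * r) * LP.toReal ^ (1/p) * LQ.toReal ^ ((p-1)/p) := by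
        rw [hcdef]; ring
end

section
/- Let (Ω, μ) be a measure space, f : Ω → [0,∞) measurable, and q ∈ (0,1) ∪ (1,∞). Suppose that for every λ > 0: (i) ∫_{{f < λ}} (λ − f)^{q−1} dμ < ∞, and (ii) μ({λ ≤ f < λ+h}) = O(h) as h → 0⁺ if q ∈ (0,1), respectively μ({λ ≤ f < λ+h}) = O(1) if q > 1. Then the function G(λ) = ∫_Ω (λ − f)_+^q dμ is differentiable on (0,∞) with G'(λ) = q ∫_{{f < λ}} (λ − f)^{q−1} dμ. -/
/-!
Write `φ_l(x) = (l - f x)_+^q`, so `G(l) = ∫ φ_l dμ` and the difference quotient of `G` at `λ` is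
the integral of the pointwise slopes of `l ↦ φ_l(x)`. On `{f < λ}` these slopes converge to
`q (λ - f)^(q-1)` and are dominated, on both sides of `λ`, by a combination of `(λ - f)^(q-1)` and
`(λ + 1 - f)^(q-1)`, both integrable by (i); dominated convergence applies. On `{f ≥ λ}` the slopes
vanish to the left of `λ`, and to the right they are at most `(l - λ)^(q-1)` on the strip
`{λ ≤ f < l}` and zero outside it, so their integral is at most `(l - λ)^(q-1) μ{λ ≤ f < l}`,
which tends to `0` by (ii).
-/

open Real MeasureTheory Filter Set Topology
open scoped ENNReal

theorem rpow_le_rpow_add_rpow_of_mem_Icc {a c d p : ℝ} (ha : 0 < a) (hac : a ≤ c) (hcd : c ≤ d) :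
    c ^ p ≤ a ^ p + d ^ p := by
  have had : 0 < d := ha.trans_le (hac.trans hcd)
  rcases le_total 0 p with hp | hp
  · linarith [rpow_le_rpow (ha.le.trans hac) hcd hp, rpow_nonneg ha.le p]
  · linarith [rpow_le_rpow_of_nonpos ha hac hp, rpow_nonneg had.le p]

theorem rpow_sub_rpow_le {q a b : ℝ} (hq : 0 ≤ q) (hb : 0 < b) (hba : b ≤ a) :
    a ^ q - b ^ q ≤ q * (b ^ (q - 1) + a ^ (q - 1)) * (a - b) := by
  rcases hba.eq_or_lt with rfl | hba
  · simp
  obtain ⟨ξ, ⟨hbξ, hξa⟩, hξ⟩ := exists_hasDerivAt_eq_slope (fun u : ℝ => u ^ q)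
    (fun u => q * u ^ (q - 1)) hba
    (fun u hu => (continuousAt_rpow_const u q (.inl (hb.trans_le hu.1).ne')).continuousWithinAt)
    (fun u hu => hasDerivAt_rpow_const (.inl (hb.trans hu.1).ne'))
  rw [eq_div_iff (sub_ne_zero.2 hba.ne')] at hξ
  rw [← hξ]
  gcongr
  exact rpow_le_rpow_add_rpow_of_mem_Icc hb hbξ.le hξa.le

theorem rpow_sub_max_rpow_le {q a b : ℝ} (hq : 0 ≤ q) (ha : 0 < a) (hba : b < a) :
    a ^ q - max b 0 ^ q ≤ (2 + q * ((2⁻¹ : ℝ) ^ (q - 1) + 2)) * a ^ (q - 1) * (a - b) := by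
  have haq : 0 ≤ a ^ (q - 1) := rpow_nonneg ha.le _
  have hK : 0 ≤ q * ((2⁻¹ : ℝ) ^ (q - 1) + 2) * a ^ (q - 1) * (a - b) := by
    have : 0 ≤ a - b := by linarith
    positivity
  -- Below `a / 2`, `a - b ≥ a / 2` absorbs `a ^ q`; above it, `[b, a] ⊆ [a / 2, a]`.
  rcases le_or_gt b (a / 2) with hb | hb
  · have h₁ : a ^ q = a ^ (q - 1) * a := by rw [rpow_sub_one ha.ne', div_mul_cancel₀ _ ha.ne']
    have h₂ : 0 ≤ max b 0 ^ q := rpow_nonneg (le_max_right _ _) _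
    nlinarith [mul_le_mul_of_nonneg_left (by linarith : a ≤ 2 * (a - b)) haq]
  · have hb0 : 0 < b := by linarith
    have hξ : b ^ (q - 1) ≤ (2⁻¹ : ℝ) ^ (q - 1) * a ^ (q - 1) + a ^ (q - 1) := by
      have := rpow_le_rpow_add_rpow_of_mem_Icc (p := q - 1) (by positivity : 0 < a / 2) hb.le
        hba.le
      rwa [div_eq_inv_mul, mul_rpow (by norm_num) ha.le] at this
    rw [max_eq_left hb0.le]
    calc a ^ q - b ^ q ≤ q * (b ^ (q - 1) + a ^ (q - 1)) * (a - b) :=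
          rpow_sub_rpow_le hq hb0 hba.le
      _ ≤ q * ((2⁻¹ : ℝ) ^ (q - 1) * a ^ (q - 1) + a ^ (q - 1) + a ^ (q - 1)) * (a - b) := by
        gcongr
      _ ≤ _ := by nlinarith [mul_nonneg haq (by linarith : (0:ℝ) ≤ a - b)]


section TruncatedPower

variable {q c lam l : ℝ}

theorem monotone_max_sub_rpow (hq : 0 ≤ q) (c : ℝ) : Monotone fun l : ℝ => max (l - c) 0 ^ q :=
  fun _ _ h => rpow_le_rpow (le_max_right _ _) (max_le_max (by linarith) le_rfl) hq

theorem slope_max_sub_rpow_nonneg (hq : 0 ≤ q) : 0 ≤ slope (fun l => max (l - c) 0 ^ q) lam l :=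
  ((monotone_max_sub_rpow hq c).monotoneOn univ).slope_nonneg trivial trivial

theorem hasDerivAt_max_sub_rpow (hc : c < lam) :
    HasDerivAt (fun l : ℝ => max (l - c) 0 ^ q) (q * (lam - c) ^ (q - 1)) lam := by
  have h := ((hasDerivAt_id lam).sub_const c).rpow_const (p := q) (.inl (sub_pos.2 hc).ne')
  rw [one_mul] at h
  refine h.congr_of_eventuallyEq ?_
  filter_upwards [Ioi_mem_nhds hc] with l (hl : c < l)
  rw [max_eq_left (sub_nonneg.2 hl.le), id]

theorem slope_max_sub_rpow_le (hq : 0 ≤ q) (hc : c < lam) (hl : l < lam + 1) (hne : l ≠ lam) :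
    slope (fun l => max (l - c) 0 ^ q) lam l ≤
      (2 + q * ((2⁻¹ : ℝ) ^ (q - 1) + 4)) * (lam - c) ^ (q - 1) + q * (lam + 1 - c) ^ (q - 1) := by
  have ha : 0 < lam - c := sub_pos.2 hc
  have haq : 0 ≤ (lam - c) ^ (q - 1) := rpow_nonneg ha.le _
  have hdq : 0 ≤ (lam + 1 - c) ^ (q - 1) := rpow_nonneg (by linarith) _
  rw [slope_def_field, max_eq_left ha.le]
  rcases hne.lt_or_gt with hl' | hl'
  · rw [← neg_div_neg_eq, neg_sub, neg_sub, div_le_iff₀ (by linarith)]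
    have := rpow_sub_max_rpow_le hq ha (by linarith : l - c < lam - c)
    rw [sub_sub_sub_cancel_right] at this
    nlinarith [mul_nonneg (mul_nonneg hq haq) (by linarith : (0:ℝ) ≤ lam - l),
      mul_nonneg (mul_nonneg hq hdq) (by linarith : (0:ℝ) ≤ lam - l)]
  · rw [max_eq_left (by linarith), div_le_iff₀ (by linarith)]
    have h₁ := rpow_sub_rpow_le hq ha (by linarith : lam - c ≤ l - c)
    have h₂ := rpow_le_rpow_add_rpow_of_mem_Icc (p := q - 1) ha
      (by linarith : lam - c ≤ l - c) (by linarith : l - c ≤ lam + 1 - c)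
    rw [sub_sub_sub_cancel_right] at h₁
    have h2q : 0 ≤ (2⁻¹ : ℝ) ^ (q - 1) := by positivity
    nlinarith [mul_le_mul_of_nonneg_left h₂ (mul_nonneg hq (by linarith : (0:ℝ) ≤ l - lam)),
      mul_nonneg (mul_nonneg hq haq) (by linarith : (0:ℝ) ≤ l - lam),
      mul_nonneg (mul_nonneg (mul_nonneg hq haq) h2q) (by linarith : (0:ℝ) ≤ l - lam),
      mul_nonneg haq (by linarith : (0:ℝ) ≤ l - lam)]

theorem slope_max_sub_rpow_eq_zero (hc : lam ≤ c) (hl : l ≤ lam) :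
    slope (fun l => max (l - c) 0 ^ q) lam l = 0 := by
  rw [slope_def_field, max_eq_right (by linarith), max_eq_right (by linarith), sub_self, zero_div]

theorem slope_max_sub_rpow_le_of_le (hq : 0 < q) (hc : lam ≤ c) (hl : lam < l) :
    slope (fun l => max (l - c) 0 ^ q) lam l ≤ if c < l then (l - lam) ^ (q - 1) else 0 := by
  rw [slope_def_field, max_eq_right (by linarith : lam - c ≤ 0), zero_rpow hq.ne', sub_zero]
  split_ifs with hcl
  · rw [max_eq_left (by linarith), div_le_iff₀ (by linarith), ← rpow_add_one (by linarith),
      sub_add_cancel]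
    exact rpow_le_rpow (by linarith) (by linarith) hq.le
  · rw [max_eq_right (by linarith), zero_rpow hq.ne', zero_div]

end TruncatedPower

theorem tendsto_mul_rpow_sub_nhdsGT {a p : ℝ} (C : ℝ) (hp : 0 < p) :
    Tendsto (fun l => C * (l - a) ^ p) (𝓝[>] a) (𝓝 0) := by
  have h := ((continuous_sub_right a).continuousAt (x := a)).rpow_const (p := p) (.inr hp.le)
  simpa [zero_rpow hp.ne'] using (h.tendsto.const_mul C).mono_left nhdsWithin_le_nhds

theorem measure_lt_top_and_tendsto_rpow_mul_toReal {m : ℝ → ℝ≥0∞} {a q : ℝ} (hq0 : 0 < q)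
    (hq1 : q ≠ 1)
    (h₁ : q < 1 → ∃ C : ℝ, ∀ h > (0:ℝ), m (a + h) ≤ ENNReal.ofReal (C * h))
    (h₂ : 1 < q → ∃ C : ℝ, ∀ h > (0:ℝ), m (a + h) ≤ ENNReal.ofReal C) :
    (∀ l > a, m l < ⊤) ∧ Tendsto (fun l => (l - a) ^ (q - 1) * (m l).toReal) (𝓝[>] a) (𝓝 0) := by
  obtain ⟨C, p, hp, hC⟩ : ∃ C p : ℝ, 0 < p ∧
      ∀ l > a, m l < ⊤ ∧ (l - a) ^ (q - 1) * (m l).toReal ≤ C * (l - a) ^ p := by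
    rcases hq1.lt_or_gt with hq | hq
    · obtain ⟨C, hC⟩ := h₁ hq
      refine ⟨|C|, q, hq0, fun l hl => ?_⟩
      have ht : 0 < l - a := sub_pos.2 hl
      have hm : m l ≤ ENNReal.ofReal (|C| * (l - a)) := by
        have := (hC _ ht).trans
          (ENNReal.ofReal_le_ofReal (mul_le_mul_of_nonneg_right (le_abs_self C) ht.le))
        rwa [add_sub_cancel] at this
      refine ⟨hm.trans_lt ENNReal.ofReal_lt_top, ?_⟩
      calc (l - a) ^ (q - 1) * (m l).toReal ≤ (l - a) ^ (q - 1) * (|C| * (l - a)) := by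
            gcongr; exact ENNReal.toReal_le_of_le_ofReal (by positivity) hm
        _ = |C| * (l - a) ^ q := by rw [rpow_sub_one ht.ne']; field_simp
    · obtain ⟨C, hC⟩ := h₂ hq
      refine ⟨|C|, q - 1, by linarith, fun l hl => ?_⟩
      have hm : m l ≤ ENNReal.ofReal |C| := by
        have := (hC _ (sub_pos.2 hl)).trans (ENNReal.ofReal_le_ofReal (le_abs_self C))
        rwa [add_sub_cancel] at this
      refine ⟨hm.trans_lt ENNReal.ofReal_lt_top, ?_⟩
      rw [mul_comm]
      gcongr
      exact ENNReal.toReal_le_of_le_ofReal (abs_nonneg C) hm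
  refine ⟨fun l hl => (hC l hl).1, squeeze_zero' ?_ ?_ (tendsto_mul_rpow_sub_nhdsGT C hp)⟩
  · filter_upwards [self_mem_nhdsWithin] with l (hl : a < l)
    exact mul_nonneg (rpow_nonneg (sub_pos.2 hl).le _) ENNReal.toReal_nonneg
  · filter_upwards [self_mem_nhdsWithin] with l hl using (hC l hl).2

section Slope

variable {α : Type*} [MeasurableSpace α] {μ : Measure α} {F : ℝ → α → ℝ} {a b : ℝ}

theorem integrable_slope (ha : Integrable (F a) μ) (hb : Integrable (F b) μ) :
    Integrable (fun x => slope (fun l => F l x) a b) μ := by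
  simp only [slope_def_field]
  exact (hb.sub ha).div_const _

theorem slope_integral (ha : Integrable (F a) μ) (hb : Integrable (F b) μ) :
    slope (fun l => ∫ x, F l x ∂μ) a b = ∫ x, slope (fun l => F l x) a b ∂μ := by
  simp only [slope_def_field]
  rw [integral_div, integral_sub hb ha]

end Slope

section DistributionIntegral

variable {Ω : Type*} [MeasurableSpace Ω] {μ : Measure Ω} {f : Ω → ℝ} {q lam l : ℝ}

theorem integrable_max_sub_rpow (hf : Measurable f) (hf0 : ∀ x, 0 ≤ f x) (hq : 0 < q)
    (hint : IntegrableOn (fun x => (l - f x) ^ (q - 1)) {x | f x < l} μ) :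
    Integrable (fun x => max (l - f x) 0 ^ q) μ := by
  refine (IntegrableOn.integrable_indicator (hint.const_mul l) (hf measurableSet_Iio)).mono'
    (by fun_prop : Measurable fun x => max (l - f x) 0 ^ q).aestronglyMeasurable
    (ae_of_all _ fun x => ?_)
  rw [norm_of_nonneg (rpow_nonneg (le_max_right _ _) _)]
  by_cases hx : f x < l
  · have hu : 0 < l - f x := sub_pos.2 hx
    rw [indicator_of_mem (show x ∈ {x | f x < l} from hx), max_eq_left hu.le]
    calc (l - f x) ^ q = (l - f x) ^ (q - 1) * (l - f x) := by
          rw [rpow_sub_one hu.ne', div_mul_cancel₀ _ hu.ne']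
      _ ≤ l * (l - f x) ^ (q - 1) := by
          rw [mul_comm]; gcongr; linarith [hf0 x]
  · rw [indicator_of_notMem (show x ∉ {x | f x < l} from hx), max_eq_right (by linarith),
      zero_rpow hq.ne']

theorem tendsto_setIntegral_slope_max_sub_rpow (hf : Measurable f) (hq : 0 ≤ q)
    (h₀ : IntegrableOn (fun x => (lam - f x) ^ (q - 1)) {x | f x < lam} μ)
    (h₁ : IntegrableOn (fun x => (lam + 1 - f x) ^ (q - 1)) {x | f x < lam + 1} μ) :
    Tendsto (fun l => ∫ x in {x | f x < lam}, slope (fun l => max (l - f x) 0 ^ q) lam l ∂μ)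
      (𝓝[≠] lam) (𝓝 (q * ∫ x in {x | f x < lam}, (lam - f x) ^ (q - 1) ∂μ)) := by
  have hA : MeasurableSet {x | f x < lam} := hf measurableSet_Iio
  rw [← integral_const_mul]
  refine tendsto_integral_filter_of_dominated_convergence
    (fun x => (2 + q * ((2⁻¹ : ℝ) ^ (q - 1) + 4)) * (lam - f x) ^ (q - 1) +
      q * (lam + 1 - f x) ^ (q - 1))
    (Eventually.of_forall fun l => ?_) ?_ ?_ ?_
  · simp only [slope_def_field]
    fun_prop
  · filter_upwards [nhdsWithin_le_nhds (Iio_mem_nhds (lt_add_one lam)), self_mem_nhdsWithin]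
      with l (hl : l < lam + 1) (hne : l ≠ lam)
    refine (ae_restrict_iff' hA).2 (ae_of_all _ fun x (hx : f x < lam) => ?_)
    rw [norm_of_nonneg (slope_max_sub_rpow_nonneg hq)]
    exact slope_max_sub_rpow_le hq hx hl hne
  · refine (h₀.const_mul _).add ((h₁.mono_set fun x (hx : f x < lam) => ?_).const_mul _)
    exact hx.trans (lt_add_one lam)
  · exact (ae_restrict_iff' hA).2 (ae_of_all _ fun x hx =>
      hasDerivAt_iff_tendsto_slope.1 (hasDerivAt_max_sub_rpow hx))

theorem setIntegral_compl_slope_max_sub_rpow_le (hf : Measurable f) (hq : 0 < q) (hl : lam < l)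
    (hfin : μ {x | lam ≤ f x ∧ f x < l} < ⊤) :
    ∫ x in {x | f x < lam}ᶜ, slope (fun l => max (l - f x) 0 ^ q) lam l ∂μ ≤
      (l - lam) ^ (q - 1) * μ.real {x | lam ≤ f x ∧ f x < l} := by
  set S := {x | lam ≤ f x ∧ f x < l}
  have hS : MeasurableSet S := (hf measurableSet_Ici).inter (hf measurableSet_Iio)
  have hind : Integrable (S.indicator fun _ => (l - lam) ^ (q - 1)) μ :=
    (integrable_indicator_iff hS).2 (integrableOn_const hfin.ne)
  calc _ ≤ ∫ x in {x | f x < lam}ᶜ, S.indicator (fun _ => (l - lam) ^ (q - 1)) x ∂μ := by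
        refine integral_mono_of_nonneg (ae_of_all _ fun x => slope_max_sub_rpow_nonneg hq.le)
          hind.integrableOn ((ae_restrict_iff' (hf measurableSet_Iio).compl).2
            (ae_of_all _ fun x (hx : ¬f x < lam) => ?_))
        refine (slope_max_sub_rpow_le_of_le hq (not_lt.1 hx) hl).trans_eq ?_
        simp [S, indicator_apply, not_lt.1 hx]
    _ ≤ ∫ x, S.indicator (fun _ => (l - lam) ^ (q - 1)) x ∂μ :=
        setIntegral_le_integral hind
          (ae_of_all _ (indicator_nonneg fun _ _ => rpow_nonneg (sub_pos.2 hl).le _))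
    _ = _ := by rw [integral_indicator_const _ hS, smul_eq_mul, mul_comm]

theorem tendsto_setIntegral_compl_slope_max_sub_rpow (hf : Measurable f) (hq : 0 < q)
    (hfin : ∀ l > lam, μ {x | lam ≤ f x ∧ f x < l} < ⊤)
    (hdecay : Tendsto (fun l => (l - lam) ^ (q - 1) * μ.real {x | lam ≤ f x ∧ f x < l})
      (𝓝[>] lam) (𝓝 0)) :
    Tendsto (fun l => ∫ x in {x | f x < lam}ᶜ, slope (fun l => max (l - f x) 0 ^ q) lam l ∂μ)
      (𝓝[≠] lam) (𝓝 0) := by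
  rw [← nhdsLT_sup_nhdsGT, tendsto_sup]
  refine ⟨tendsto_const_nhds.congr' ?_, squeeze_zero' ?_ ?_ hdecay⟩
  · filter_upwards [self_mem_nhdsWithin] with l (hl : l < lam)
    exact (setIntegral_eq_zero_of_forall_eq_zero fun x (hx : ¬f x < lam) =>
      slope_max_sub_rpow_eq_zero (not_lt.1 hx) hl.le).symm
  · exact Eventually.of_forall fun l => integral_nonneg fun x => slope_max_sub_rpow_nonneg hq.le
  · filter_upwards [self_mem_nhdsWithin] with l (hl : lam < l)
    exact setIntegral_compl_slope_max_sub_rpow_le hf hq hl (hfin l hl)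

end DistributionIntegral

/-- Differentiability of `G(λ) = ∫ (λ − f)_+^q dμ` (Proposition "key" of the paper). -/
theorem deriv_of_plus_power_integral
    {Ω : Type*} [MeasurableSpace Ω] (μ : Measure Ω)
    (f : Ω → ℝ) (hfmeas : Measurable f) (hfnonneg : ∀ x, 0 ≤ f x)
    (q : ℝ) (hq0 : 0 < q) (hq1 : q ≠ 1)
    (hint : ∀ lam > (0:ℝ),
      IntegrableOn (fun x => (lam - f x) ^ (q - 1)) {x | f x < lam} μ)
    (hO1 : q < 1 → ∀ lam > (0:ℝ), ∃ C : ℝ, ∀ h > (0:ℝ),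
      μ {x | lam ≤ f x ∧ f x < lam + h} ≤ ENNReal.ofReal (C * h))
    (hO2 : 1 < q → ∀ lam > (0:ℝ), ∃ C : ℝ, ∀ h > (0:ℝ),
      μ {x | lam ≤ f x ∧ f x < lam + h} ≤ ENNReal.ofReal C) :
    ∀ lam > (0:ℝ),
      HasDerivAt (fun l : ℝ => ∫ x, (max (l - f x) 0) ^ q ∂μ)
        (q * ∫ x in {x | f x < lam}, (lam - f x) ^ (q - 1) ∂μ) lam := by
  intro lam hlam
  have hφ : ∀ l > 0, Integrable (fun x => max (l - f x) 0 ^ q) μ := fun l hl =>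
    integrable_max_sub_rpow hfmeas hfnonneg hq0 (hint l hl)
  obtain ⟨hfin, hdecay⟩ := measure_lt_top_and_tendsto_rpow_mul_toReal
    (m := fun l => μ {x | lam ≤ f x ∧ f x < l}) hq0 hq1
    (fun hq => hO1 hq lam hlam) (fun hq => hO2 hq lam hlam)
  rw [hasDerivAt_iff_tendsto_slope, ← add_zero (q * _)]
  refine ((tendsto_setIntegral_slope_max_sub_rpow hfmeas hq0.le (hint lam hlam)
    (hint (lam + 1) (by linarith))).add
    (tendsto_setIntegral_compl_slope_max_sub_rpow hfmeas hq0 hfin hdecay)).congr' ?_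
  filter_upwards [nhdsWithin_le_nhds (Ioi_mem_nhds hlam)] with l (hl : 0 < l)
  rw [slope_integral (hφ lam hlam) (hφ l hl),
    integral_add_compl (measurableSet_lt hfmeas measurable_const)
      (integrable_slope (hφ lam hlam) (hφ l hl))]
end

section
/- Let n ≥ 2, p > 1, 0 < r < p with r ≠ 1, and α, β, γ satisfy 1/r − γ/n > 0, 1/p − α/n > 0, 1 − β/n > 0, γ = (1+α)/r + ((p−1)/(pr))β, and 1 + α − β/p > 0. Then for λ > 0 the compactly supported function f(x) = (λ − |x|^{1+α−β/p})_+^{(p−1)/(p−r)} attains equality in the CKN inequality: ∫_{ℝ^n} |f|^r |x|^{−γr} dx = (r/(n−γr)) (∫_{ℝ^n} |∇f|^p |x|^{−αp} dx)^{1/p} (∫_{supp f} |f|^{p(r−1)/(p−1)} |x|^{−β} dx)^{(p−1)/p}. -/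
/-!
Write `λ = R ^ σ` with `σ = 1 + α - β / p`, `q = (p - 1) / (p - r)` and `A = n - γ r`, so that
`f x = P ‖x‖` with `P t = (R ^ σ - t ^ σ)₊ ^ q`. All three integrals are radial; in polar
coordinates, and using the balance condition in the form `γ r = σ + β`, they become `c I₀`,
`c I₁` and `c (q σ) ^ p I₁`, where `c = n |B₁|`,
`I₀ = ∫₀ᴿ t ^ (A - 1) (R ^ σ - t ^ σ) ^ (q r)` and
`I₁ = ∫₀ᴿ t ^ (A + σ - 1) (R ^ σ - t ^ σ) ^ (q r - 1)`.
The right-hand side is therefore `(r / A) (q σ) c I₁`, and one integration by parts gives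
`I₀ = (q r σ / A) I₁`.
-/

open Real MeasureTheory Set Metric Module

theorem hasDerivAt_sub_rpow_rpow {lam σ c t : ℝ} (ht : 0 < t) (htl : t ^ σ < lam) :
    HasDerivAt (fun s => (lam - s ^ σ) ^ c)
      (-(c * σ * (t ^ (σ - 1) * (lam - t ^ σ) ^ (c - 1)))) t := by
  have h := ((hasDerivAt_rpow_const (p := σ) (Or.inl ht.ne')).const_sub lam).rpow_const
    (p := c) (Or.inl (sub_pos.2 htl).ne')
  convert h using 1
  ring

theorem intervalIntegrable_rpow_mul_sub_rpow_rpow {R σ c : ℝ} (hR : 0 ≤ R) (hσ : 0 < σ)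
    (hc : 0 < c) :
    IntervalIntegrable (fun t => t ^ (σ - 1) * (R ^ σ - t ^ σ) ^ (c - 1)) volume 0 R := by
  have hcont : ContinuousOn (fun t => -(R ^ σ - t ^ σ) ^ c) (uIcc 0 R) :=
    ((continuousOn_const.sub (continuousOn_id.rpow_const fun _ _ => Or.inr hσ.le)).rpow_const
      fun _ _ => Or.inr hc.le).neg
  have hderiv : ∀ t ∈ Ioo (min 0 R) (max 0 R), HasDerivAt (fun t => -(R ^ σ - t ^ σ) ^ c)
      (c * σ * (t ^ (σ - 1) * (R ^ σ - t ^ σ) ^ (c - 1))) t := by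
    rw [min_eq_left hR, max_eq_right hR]
    intro t ht
    simpa using (hasDerivAt_sub_rpow_rpow ht.1 (rpow_lt_rpow ht.1.le ht.2 hσ)).fun_neg
  have h := (intervalIntegral.intervalIntegrable_deriv_of_nonneg hcont hderiv fun t ht => by
    rw [min_eq_left hR, max_eq_right hR] at ht
    have := sub_nonneg.2 (rpow_le_rpow ht.1.le ht.2.le hσ.le)
    have := ht.1
    positivity).const_mul (c * σ)⁻¹
  convert h using 2 with t
  field_simp

theorem integral_rpow_mul_sub_rpow_rpow {R σ A c : ℝ} (hR : 0 ≤ R) (hσ : 0 < σ) (hA : 0 < A)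
    (hc : 0 < c) :
    ∫ t in 0..R, t ^ (A - 1) * (R ^ σ - t ^ σ) ^ c =
      c * σ / A * ∫ t in 0..R, t ^ (A + σ - 1) * (R ^ σ - t ^ σ) ^ (c - 1) := by
  have hIoo : Ioo (min 0 R) (max 0 R) = Ioo 0 R := by rw [min_eq_left hR, max_eq_right hR]
  have hibp := intervalIntegral.integral_mul_deriv_eq_deriv_mul_of_hasDerivAt
    (u := fun t => t ^ A) (v := fun t => (R ^ σ - t ^ σ) ^ c)
    (u' := fun t => A * t ^ (A - 1))
    (v' := fun t => -(c * σ * (t ^ (σ - 1) * (R ^ σ - t ^ σ) ^ (c - 1))))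
    (continuousOn_id.rpow_const fun _ _ => Or.inr hA.le)
    ((continuousOn_const.sub (continuousOn_id.rpow_const fun _ _ => Or.inr hσ.le)).rpow_const
      fun _ _ => Or.inr hc.le)
    (hIoo ▸ fun t ht => hasDerivAt_rpow_const (Or.inl ht.1.ne'))
    (hIoo ▸ fun t ht => hasDerivAt_sub_rpow_rpow ht.1 (rpow_lt_rpow ht.1.le ht.2 hσ))
    ((intervalIntegral.intervalIntegrable_rpow' (by linarith)).const_mul A)
    ((intervalIntegrable_rpow_mul_sub_rpow_rpow hR hσ hc).const_mul (c * σ)).neg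
  have hleft : ∫ t in 0..R, t ^ A * -(c * σ * (t ^ (σ - 1) * (R ^ σ - t ^ σ) ^ (c - 1))) =
      -(c * σ) * ∫ t in 0..R, t ^ (A + σ - 1) * (R ^ σ - t ^ σ) ^ (c - 1) := by
    rw [← intervalIntegral.integral_const_mul]
    refine intervalIntegral.integral_congr_ae (Filter.Eventually.of_forall fun t ht => ?_)
    rw [uIoc_of_le hR] at ht
    rw [show A + σ - 1 = A + (σ - 1) by ring, rpow_add ht.1]
    ring
  have hright : ∫ t in 0..R, A * t ^ (A - 1) * (R ^ σ - t ^ σ) ^ c =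
      A * ∫ t in 0..R, t ^ (A - 1) * (R ^ σ - t ^ σ) ^ c := by
    simp_rw [mul_assoc, intervalIntegral.integral_const_mul]
  simp only [sub_self, zero_rpow hc.ne', zero_rpow hA.ne', mul_zero, zero_mul] at hibp
  rw [hleft, hright] at hibp
  field_simp
  linarith

section Radial

variable {E : Type*} [NormedAddCommGroup E]

theorem integral_comp_norm_eq_intervalIntegral [NormedSpace ℝ E] [FiniteDimensional ℝ E]
    [Nontrivial E] [MeasurableSpace E] [BorelSpace E] (μ : Measure E) [μ.IsAddHaarMeasure]
    {L K : ℝ → ℝ} {R : ℝ} (hR : 0 ≤ R) (hL : ∀ t, R < t → L t = 0)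
    (hK : ∀ t ∈ Ioo 0 R, t ^ ((finrank ℝ E : ℝ) - 1) * L t = K t) :
    ∫ x, L ‖x‖ ∂μ = finrank ℝ E * μ.real (ball 0 1) * ∫ t in 0..R, K t := by
  have hd : 1 ≤ finrank ℝ E := finrank_pos
  rw [integral_fun_norm_addHaar, nsmul_eq_mul, smul_eq_mul, mul_assoc,
    intervalIntegral.integral_of_le hR, integral_Ioc_eq_integral_Ioo,
    ← setIntegral_congr_fun measurableSet_Ioo hK, ← integral_Ioc_eq_integral_Ioo,
    ← setIntegral_eq_of_subset_of_forall_sdiff_eq_zero measurableSet_Ioi Ioc_subset_Ioi_self]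
  · refine congrArg _ (congrArg _ (setIntegral_congr_fun measurableSet_Ioi fun t ht => ?_))
    rw [smul_eq_mul, ← rpow_natCast, Nat.cast_sub hd, Nat.cast_one]
  · intro t ht
    rw [hL t (not_le.1 fun h => ht.2 ⟨ht.1, h⟩), mul_zero]

theorem norm_gradient_comp_norm [InnerProductSpace ℝ E] [CompleteSpace E] {g : ℝ → ℝ} {x : E}
    (hx : x ≠ 0) (hg : DifferentiableAt ℝ g ‖x‖) :
    ‖gradient (fun y => g ‖y‖) x‖ = |deriv g ‖x‖| := by
  have : Nontrivial E := nontrivial_of_ne x 0 hx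
  have hnorm : DifferentiableAt ℝ (‖·‖) x :=
    (contDiffAt_norm ℝ hx (n := 1)).differentiableAt one_ne_zero
  have h : HasFDerivAt (fun y => g ‖y‖) (deriv g ‖x‖ • fderiv ℝ (‖·‖) x) x :=
    hg.hasDerivAt.comp_hasFDerivAt x hnorm.hasFDerivAt
  rw [gradient, LinearIsometryEquiv.norm_map, h.fderiv, norm_smul,
    norm_fderiv_norm hnorm, mul_one, norm_eq_abs]

end Radial

noncomputable def extremalProfile (R σ q t : ℝ) : ℝ := (max (R ^ σ - t ^ σ) 0) ^ q

section Profile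

variable {R σ q t : ℝ}

theorem extremalProfile_of_lt (hσ : 0 < σ) (ht : 0 ≤ t) (htR : t < R) :
    extremalProfile R σ q t = (R ^ σ - t ^ σ) ^ q := by
  rw [extremalProfile, max_eq_left (sub_nonneg.2 (rpow_le_rpow ht htR.le hσ.le))]

theorem extremalProfile_of_le (hσ : 0 < σ) (hq : q ≠ 0) (hR : 0 ≤ R) (hRt : R ≤ t) :
    extremalProfile R σ q t = 0 := by
  rw [extremalProfile, max_eq_right (sub_nonpos.2 (rpow_le_rpow hR hRt hσ.le)), zero_rpow hq]

theorem extremalProfile_ne_zero_iff (hσ : 0 < σ) (hq : q ≠ 0) (hR : 0 ≤ R) (ht : 0 ≤ t) :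
    extremalProfile R σ q t ≠ 0 ↔ t < R := by
  refine ⟨fun h => not_le.1 fun hRt => h (extremalProfile_of_le hσ hq hR hRt), fun htR => ?_⟩
  rw [extremalProfile_of_lt hσ ht htR]
  exact (rpow_pos_of_pos (sub_pos.2 (rpow_lt_rpow ht htR hσ)) q).ne'

theorem hasDerivAt_extremalProfile_of_lt (hσ : 0 < σ) (ht : 0 < t) (htR : t < R) :
    HasDerivAt (extremalProfile R σ q)
      (-(q * σ * (t ^ (σ - 1) * (R ^ σ - t ^ σ) ^ (q - 1)))) t :=
  (hasDerivAt_sub_rpow_rpow ht (rpow_lt_rpow ht.le htR hσ)).congr_of_eventuallyEq <|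
    Filter.eventually_of_mem (Ioo_mem_nhds ht htR) fun _ hs =>
      extremalProfile_of_lt hσ hs.1.le hs.2

theorem hasDerivAt_extremalProfile_of_gt (hσ : 0 < σ) (hq : q ≠ 0) (hR : 0 ≤ R) (hRt : R < t) :
    HasDerivAt (extremalProfile R σ q) 0 t :=
  (hasDerivAt_const t 0).congr_of_eventuallyEq <|
    Filter.eventually_of_mem (Ioi_mem_nhds hRt) fun _ hs =>
      extremalProfile_of_le hσ hq hR (le_of_lt hs)

end Profile

section RadialIntegrals

variable {E : Type*} [NormedAddCommGroup E] [InnerProductSpace ℝ E] [FiniteDimensional ℝ E]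
  [Nontrivial E] [MeasurableSpace E] [BorelSpace E] (μ : Measure E) [μ.IsAddHaarMeasure]
  {R σ q : ℝ}

theorem integral_abs_extremalProfile_rpow_mul_norm_rpow (hR : 0 ≤ R) (hσ : 0 < σ) (hq : 0 < q)
    {r : ℝ} (hr : 0 < r) (s : ℝ) :
    ∫ x, |extremalProfile R σ q ‖x‖| ^ r * ‖x‖ ^ (-s) ∂μ =
      finrank ℝ E * μ.real (ball 0 1) *
        ∫ t in 0..R, t ^ ((finrank ℝ E : ℝ) - s - 1) * (R ^ σ - t ^ σ) ^ (q * r) := by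
  refine integral_comp_norm_eq_intervalIntegral μ hR
    (L := fun t => |extremalProfile R σ q t| ^ r * t ^ (-s)) (fun t hRt => ?_) fun t ht => ?_
  · rw [extremalProfile_of_le hσ hq.ne' hR hRt.le, abs_zero, zero_rpow hr.ne', zero_mul]
  · have hX : 0 ≤ R ^ σ - t ^ σ := sub_nonneg.2 (rpow_le_rpow ht.1.le ht.2.le hσ.le)
    rw [extremalProfile_of_lt hσ ht.1.le ht.2, abs_of_nonneg (rpow_nonneg hX q), ← rpow_mul hX,
      show (finrank ℝ E : ℝ) - s - 1 = (finrank ℝ E - 1) + -s by ring, rpow_add ht.1]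
    ring

theorem setIntegral_support_extremalProfile (hR : 0 ≤ R) (hσ : 0 < σ) (hq : 0 < q)
    (e β : ℝ) :
    ∫ x in Function.support (fun x : E => extremalProfile R σ q ‖x‖),
        |extremalProfile R σ q ‖x‖| ^ e * ‖x‖ ^ (-β) ∂μ =
      finrank ℝ E * μ.real (ball 0 1) *
        ∫ t in 0..R, t ^ ((finrank ℝ E : ℝ) - β - 1) * (R ^ σ - t ^ σ) ^ (q * e) := by
  have hsupp : Function.support (fun x : E => extremalProfile R σ q ‖x‖) = norm ⁻¹' Iio R := by
    ext x
    exact extremalProfile_ne_zero_iff hσ hq.ne' hR (norm_nonneg x)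
  rw [hsupp, ← integral_indicator (measurableSet_Iio.preimage measurable_norm)]
  refine integral_comp_norm_eq_intervalIntegral μ hR
    (L := (Iio R).indicator fun t => |extremalProfile R σ q t| ^ e * t ^ (-β))
    (fun t hRt => ?_) fun t ht => ?_
  · exact indicator_of_notMem (show t ∉ Iio R from not_lt.2 hRt.le) _
  · have hX : 0 ≤ R ^ σ - t ^ σ := sub_nonneg.2 (rpow_le_rpow ht.1.le ht.2.le hσ.le)
    rw [indicator_of_mem (show t ∈ Iio R from ht.2), extremalProfile_of_lt hσ ht.1.le ht.2,
      abs_of_nonneg (rpow_nonneg hX q), ← rpow_mul hX,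
      show (finrank ℝ E : ℝ) - β - 1 = (finrank ℝ E - 1) + -β by ring, rpow_add ht.1]
    ring

theorem integral_norm_gradient_extremalProfile_rpow_mul_norm_rpow (hR : 0 ≤ R) (hσ : 0 < σ)
    (hq : 0 < q) {p : ℝ} (hp : 0 < p) (s : ℝ) :
    ∫ x, ‖gradient (fun x : E => extremalProfile R σ q ‖x‖) x‖ ^ p * ‖x‖ ^ (-s) ∂μ =
      finrank ℝ E * μ.real (ball 0 1) * ((q * σ) ^ p *
        ∫ t in 0..R, t ^ ((finrank ℝ E : ℝ) - 1 + (σ - 1) * p - s) *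
          (R ^ σ - t ^ σ) ^ ((q - 1) * p)) := by
  have hae : ∀ᵐ x ∂μ, ‖gradient (fun x : E => extremalProfile R σ q ‖x‖) x‖ ^ p * ‖x‖ ^ (-s) =
      |deriv (extremalProfile R σ q) ‖x‖| ^ p * ‖x‖ ^ (-s) := by
    have hsphere : ∀ᵐ x ∂μ, x ∉ sphere (0 : E) R :=
      measure_eq_zero_iff_ae_notMem.1 (Measure.addHaar_sphere μ 0 R)
    filter_upwards [μ.ae_ne 0, hsphere] with x hx0 hxR
    have hpos : 0 < ‖x‖ := norm_pos_iff.2 hx0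
    have hdiff : DifferentiableAt ℝ (extremalProfile R σ q) ‖x‖ := by
      rcases lt_or_gt_of_ne (mem_sphere_zero_iff_norm.not.1 hxR) with h | h
      · exact (hasDerivAt_extremalProfile_of_lt hσ hpos h).differentiableAt
      · exact (hasDerivAt_extremalProfile_of_gt hσ hq.ne' hR h).differentiableAt
    rw [norm_gradient_comp_norm hx0 hdiff]
  rw [integral_congr_ae hae, ← intervalIntegral.integral_const_mul]
  refine integral_comp_norm_eq_intervalIntegral μ hR
    (L := fun t => |deriv (extremalProfile R σ q) t| ^ p * t ^ (-s)) (fun t hRt => ?_)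
    fun t ht => ?_
  · rw [(hasDerivAt_extremalProfile_of_gt hσ hq.ne' hR hRt).deriv, abs_zero, zero_rpow hp.ne',
      zero_mul]
  · have hX : 0 ≤ R ^ σ - t ^ σ := sub_nonneg.2 (rpow_le_rpow ht.1.le ht.2.le hσ.le)
    rw [(hasDerivAt_extremalProfile_of_lt hσ ht.1 ht.2).deriv, abs_neg,
      abs_of_nonneg (by have := ht.1; positivity),
      mul_rpow (x := q * σ) (by positivity) (by have := ht.1; positivity),
      mul_rpow (rpow_nonneg ht.1.le _) (rpow_nonneg hX _), ← rpow_mul ht.1.le, ← rpow_mul hX,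
      show (finrank ℝ E : ℝ) - 1 + (σ - 1) * p - s = (finrank ℝ E - 1) + ((σ - 1) * p + -s) by
        ring, rpow_add ht.1, rpow_add ht.1]
    ring

end RadialIntegrals

theorem rpow_mul_rpow_one_div_mul_rpow_sub_one_div {a b p : ℝ} (ha : 0 ≤ a) (hb : 0 ≤ b)
    (hp : 0 < p) : (a ^ p * b) ^ (1 / p) * b ^ ((p - 1) / p) = a * b := by
  have hexp : 1 / p + (p - 1) / p = 1 := by field_simp; ring
  rw [mul_rpow (rpow_nonneg ha p) hb, ← rpow_mul ha, mul_one_div_cancel hp.ne', rpow_one,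
    mul_assoc, ← rpow_add' hb (by rw [hexp]; exact one_ne_zero), hexp, rpow_one]

theorem ckn_extremal_r_lt_p_general
    (n : ℕ) (hn : 2 ≤ n) (p r α β γ : ℝ) (hp : 1 < p) (hr0 : 0 < r) (hrp : r < p)
    (h1 : 0 < 1/r - γ/n)
    (hbal : γ = (1+α)/r + ((p-1)/(p*r)) * β)
    (hσ : 0 < 1 + α - β/p)
    (lam : ℝ) (hlam : 0 < lam)
    (f : EuclideanSpace ℝ (Fin n) → ℝ)
    (hf : f = fun x => (max (lam - ‖x‖ ^ (1 + α - β/p)) 0) ^ ((p-1)/(p-r))) :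
    ∫ x : EuclideanSpace ℝ (Fin n), |f x| ^ r * ‖x‖ ^ (-(γ * r)) =
      (r / (n - γ * r)) *
        (∫ x : EuclideanSpace ℝ (Fin n), ‖gradient f x‖ ^ p * ‖x‖ ^ (-(α * p))) ^ (1/p) *
        (∫ x in Function.support f,
            |f x| ^ (p * (r-1)/(p-1)) * ‖x‖ ^ (-β)) ^ ((p-1)/p) := by
  set σ := 1 + α - β / p with hσdef
  set q := (p - 1) / (p - r) with hqdef
  obtain ⟨R, hR, rfl⟩ : ∃ R, 0 < R ∧ R ^ σ = lam :=
    ⟨lam ^ σ⁻¹, by positivity, rpow_inv_rpow hlam.le hσ.ne'⟩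
  obtain rfl : f = fun x => extremalProfile R σ q ‖x‖ := hf
  have : NeZero n := ⟨by omega⟩
  have hp0 : 0 < p := by linarith
  have hq : 0 < q := div_pos (by linarith) (by linarith)
  have hA : 0 < (n : ℝ) - γ * r := by
    have := mul_pos (mul_pos hr0 (by positivity : (0 : ℝ) < n)) h1
    field_simp at this
    linarith
  have hγr : γ * r = σ + β := by
    rw [hbal, hσdef]
    field_simp
    ring
  beta_reduce
  rw [integral_abs_extremalProfile_rpow_mul_norm_rpow _ hR.le hσ hq hr0,
    setIntegral_support_extremalProfile _ hR.le hσ hq,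
    integral_norm_gradient_extremalProfile_rpow_mul_norm_rpow _ hR.le hσ hq hp0,
    finrank_euclideanSpace_fin, integral_rpow_mul_sub_rpow_rpow hR.le hσ hA (by positivity),
    show (n : ℝ) - β - 1 = n - γ * r + σ - 1 by linarith,
    show (n : ℝ) - 1 + (σ - 1) * p - α * p = n - γ * r + σ - 1 by
      rw [hγr, hσdef]; field_simp; ring,
    show q * (p * (r - 1) / (p - 1)) = q * r - 1 by
      rw [hqdef]; field_simp [show p - r ≠ 0 by linarith, show p - 1 ≠ 0 by linarith]; ring,
    show (q - 1) * p = q * r - 1 by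
      rw [hqdef]; field_simp [show p - r ≠ 0 by linarith]; ring]
  set I := ∫ t in 0..R, t ^ ((n : ℝ) - γ * r + σ - 1) * (R ^ σ - t ^ σ) ^ (q * r - 1)
  have hI : 0 ≤ I := intervalIntegral.integral_nonneg hR.le fun t ht =>
    mul_nonneg (rpow_nonneg ht.1 _) (rpow_nonneg (sub_nonneg.2 (rpow_le_rpow ht.1 ht.2 hσ.le)) _)
  rw [mul_left_comm _ ((q * σ) ^ p), mul_assoc _ ((_ * _) ^ (1 / p)),
    rpow_mul_rpow_one_div_mul_rpow_sub_one_div (by positivity) (by positivity) hp0]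
  field_simp

/-- The compactly supported functions `f(x) = (λ − |x|^{1+α−β/p})_+^{(p−1)/(p−r)}` are
extremal for the CKN inequality in the regime `0 < r < p`, `r ≠ 1`. -/
theorem ckn_extremal_r_lt_p
    (n : ℕ) (hn : 2 ≤ n) (p r α β γ : ℝ) (hp : 1 < p) (hr0 : 0 < r) (hrp : r < p)
    (hr1 : r ≠ 1)
    (h1 : 0 < 1/r - γ/n) (h2 : 0 < 1/p - α/n) (h3 : 0 < 1 - β/n)
    (hbal : γ = (1+α)/r + ((p-1)/(p*r)) * β)
    (hσ : 0 < 1 + α - β/p)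
    (lam : ℝ) (hlam : 0 < lam)
    (f : EuclideanSpace ℝ (Fin n) → ℝ)
    (hf : f = fun x => (max (lam - ‖x‖ ^ (1 + α - β/p)) 0) ^ ((p-1)/(p-r))) :
    ∫ x : EuclideanSpace ℝ (Fin n), |f x| ^ r * ‖x‖ ^ (-(γ * r)) =
      (r / (n - γ * r)) *
        (∫ x : EuclideanSpace ℝ (Fin n), ‖gradient f x‖ ^ p * ‖x‖ ^ (-(α * p))) ^ (1/p) *
        (∫ x in Function.support f,
            |f x| ^ (p * (r-1)/(p-1)) * ‖x‖ ^ (-β)) ^ ((p-1)/p) :=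
  ckn_extremal_r_lt_p_general n hn p r α β γ hp hr0 hrp h1 hbal hσ lam hlam f hf
end
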